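/- Let κ be strongly inaccessible and let b, h : κ → κ be increasing with b(α) an infinite cardinal and h(α) a cardinal with 2 ≤ h(α) ≤ b(α) for every α < κ. For each cardinal λ < κ put D_λ = {α < κ : b(α) ≤ λ} ∪ {α < κ : h(α) = b(α) and cf(b(α)) ≤ λ}. Then: (i) if there is a least cardinal λ < κ such that D_λ is cofinal in κ, then b_κ^{b,h}(∌^∞) = λ; (ii) if D_λ is bounded in κ for every λ < κ and there is a stationary set S ⊆ κ such that either (a) b is continuous on S, or (b) for every ξ ∈ S there exists α_ξ ≥ ξ with h(α_ξ) = b(α_ξ) and cf(b(α_ξ)) ≤ ξ, then b_κ^{b,h}(∌^∞) = κ; (iii) if D_λ is bounded in κ for every λ < κ and there is a club set C ⊆ κ such that b is discontinuous on C and for every ξ ∈ C and every α ≥ ξ, h(α) = b(α) implies cf(b(α)) > ξ, then b_κ^{b,h}(∌^∞) ≥ κ⁺. -/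

import Mathlib

open Cardinal Set

namespace BGBS

/-- `P` holds for almost all `α < κ`, i.e. for all `α` above some `β < κ`. -/
def AlmostAll (κ : Ordinal.{0}) (P : Ordinal.{0} → Prop) : Prop :=
  ∃ β < κ, ∀ α, β < α → α < κ → P α

/-- `P` holds for cofinally many `α < κ`. -/
def Cofinally (κ : Ordinal.{0}) (P : Ordinal.{0} → Prop) : Prop :=
  ∀ β < κ, ∃ α, β < α ∧ α < κ ∧ P α

/-- The set `{α < κ | P α}` is bounded in `κ`. -/
def BoundedIn (κ : Ordinal.{0}) (P : Ordinal.{0} → Prop) : Prop :=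
  ∃ β < κ, ∀ α, α < κ → P α → α < β

/-- An ordinal which is (the initial ordinal of) an infinite cardinal. -/
def IsInfCard (o : Ordinal.{0}) : Prop := o.card.ord = o ∧ ℵ₀ ≤ o.card

/-- An ordinal which is (the initial ordinal of) a cardinal. -/
def IsCardOrd (o : Ordinal.{0}) : Prop := o.card.ord = o

/-- The bounded product space `∏ b`: functions on `κ` with `f α < b α`
(and value `0` outside of `κ`, for definiteness). -/
def prodSet (κ : Ordinal.{0}) (b : Ordinal.{0} → Ordinal.{0}) :
    Set (Ordinal.{0} → Ordinal.{0}) :=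
  {f | ∀ α, (α < κ → f α < b α) ∧ (¬ α < κ → f α = 0)}

/-- `f ≤* g` : `f α ≤ g α` for almost all `α < κ`. -/
def leStar (κ : Ordinal.{0}) (f g : Ordinal.{0} → Ordinal.{0}) : Prop :=
  AlmostAll κ fun α => f α ≤ g α

/-- `f α ≠ g α` for almost all `α < κ` (eventual difference). -/
def neStar (κ : Ordinal.{0}) (f g : Ordinal.{0} → Ordinal.{0}) : Prop :=
  AlmostAll κ fun α => f α ≠ g α

/-- `f =^∞ g` : `f α = g α` for cofinally many `α < κ`. -/
def eqInfty (κ : Ordinal.{0}) (f g : Ordinal.{0} → Ordinal.{0}) : Prop :=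
  Cofinally κ fun α => f α = g α

/-- The set of `(b,h)`-slaloms: `φ α ⊆ b α` and `|φ α| < h α` for `α < κ`
(and `φ α = ∅` outside of `κ`, for definiteness). -/
def slalomSet (κ : Ordinal.{0}) (b h : Ordinal.{0} → Ordinal.{0}) :
    Set (Ordinal.{0} → Set Ordinal.{0}) :=
  {φ | ∀ α, (α < κ → φ α ⊆ Iio (b α) ∧ #(φ α) < Cardinal.lift.{1} (h α).card)
      ∧ (¬ α < κ → φ α = ∅)}

/-- `f ∈* φ` : `f α ∈ φ α` for almost all `α < κ`. -/
def inStar (κ : Ordinal.{0}) (f : Ordinal.{0} → Ordinal.{0})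
    (φ : Ordinal.{0} → Set Ordinal.{0}) : Prop :=
  AlmostAll κ fun α => f α ∈ φ α

/-- `f ∈^∞ φ` : `f α ∈ φ α` for cofinally many `α < κ`. -/
def inInfty (κ : Ordinal.{0}) (f : Ordinal.{0} → Ordinal.{0})
    (φ : Ordinal.{0} → Set Ordinal.{0}) : Prop :=
  Cofinally κ fun α => f α ∈ φ α

/-- `f α ∉ φ α` for almost all `α < κ` (the antilocalisation relation). -/
def notInStar (κ : Ordinal.{0}) (φ : Ordinal.{0} → Set Ordinal.{0})
    (f : Ordinal.{0} → Ordinal.{0}) : Prop :=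
  AlmostAll κ fun α => f α ∉ φ α

/-- The norm of the relational system `⟨Xs, Ys, R⟩`: the least cardinality of a
set `W ⊆ Ys` such that every `x ∈ Xs` is `R`-related to some member of `W`. -/
noncomputable def normOf {X : Type*} {Y : Type*} (Xs : Set X) (Ys : Set Y)
    (R : X → Y → Prop) : Cardinal :=
  sInf { c | ∃ W, W ⊆ Ys ∧ (∀ x ∈ Xs, ∃ y ∈ W, R x y) ∧ c = #W }

/-- A Tukey connection between set-based relational systems. -/
def Tukey {X Y X' Y' : Type*} (Xs : Set X) (Ys : Set Y) (R : X → Y → Prop)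
    (Xs' : Set X') (Ys' : Set Y') (R' : X' → Y' → Prop) : Prop :=
  ∃ (ρm : X → X') (ρp : Y' → Y),
    (∀ x ∈ Xs, ρm x ∈ Xs') ∧ (∀ y' ∈ Ys', ρp y' ∈ Ys) ∧
    ∀ x ∈ Xs, ∀ y' ∈ Ys', R' (ρm x) y' → R x (ρp y')

/-- The dominating number `d_κ^b(≤*)`. -/
noncomputable def dLeq (κ : Ordinal.{0}) (b : Ordinal.{0} → Ordinal.{0}) : Cardinal.{1} :=
  normOf (prodSet κ b) (prodSet κ b) (leStar κ)

/-- The unbounding number `b_κ^b(≤*)`. -/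
noncomputable def bLeq (κ : Ordinal.{0}) (b : Ordinal.{0} → Ordinal.{0}) : Cardinal.{1} :=
  normOf (prodSet κ b) (prodSet κ b) fun g f => ¬ leStar κ f g

/-- The eventual difference number `d_κ^b(≠^∞)`. -/
noncomputable def dNeq (κ : Ordinal.{0}) (b : Ordinal.{0} → Ordinal.{0}) : Cardinal.{1} :=
  normOf (prodSet κ b) (prodSet κ b) (neStar κ)

/-- The cofinal equality number `b_κ^b(≠^∞)`. -/
noncomputable def bNeq (κ : Ordinal.{0}) (b : Ordinal.{0} → Ordinal.{0}) : Cardinal.{1} :=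
  normOf (prodSet κ b) (prodSet κ b) fun g f => eqInfty κ g f

/-- The localisation number `d_κ^{b,h}(∈*)`. -/
noncomputable def dLoc (κ : Ordinal.{0}) (b h : Ordinal.{0} → Ordinal.{0}) : Cardinal.{1} :=
  normOf (prodSet κ b) (slalomSet κ b h) (inStar κ)

/-- The avoidance number `b_κ^{b,h}(∈*)`. -/
noncomputable def bLoc (κ : Ordinal.{0}) (b h : Ordinal.{0} → Ordinal.{0}) : Cardinal.{1} :=
  normOf (slalomSet κ b h) (prodSet κ b) fun φ f => ¬ inStar κ f φ

/-- The anti-avoidance number `d_κ^{b,h}(∌^∞)`. -/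
noncomputable def dAntiLoc (κ : Ordinal.{0}) (b h : Ordinal.{0} → Ordinal.{0}) : Cardinal.{1} :=
  normOf (slalomSet κ b h) (prodSet κ b) (notInStar κ)

/-- The antilocalisation number `b_κ^{b,h}(∌^∞)`. -/
noncomputable def bAntiLoc (κ : Ordinal.{0}) (b h : Ordinal.{0} → Ordinal.{0}) : Cardinal.{1} :=
  normOf (prodSet κ b) (slalomSet κ b h) (inInfty κ)

/-- `b` is increasing (below `κ`). -/
def IncreasingOn (κ : Ordinal.{0}) (b : Ordinal.{0} → Ordinal.{0}) : Prop :=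
  ∀ α β, α ≤ β → β < κ → b α ≤ b β

/-- `f` is continuous at every limit ordinal of `A` (below `κ`). -/
def ContinuousOn (κ : Ordinal.{0}) (f : Ordinal.{0} → Ordinal.{0}) (A : Set Ordinal.{0}) : Prop :=
  ∀ γ ∈ A, γ < κ → (γ ≠ 0 ∧ ∀ a < γ, Order.succ a < γ) → f γ = sSup (f '' Iio γ)

/-- `f` is discontinuous at every limit ordinal of `A` (below `κ`). -/
def DiscontinuousOn (κ : Ordinal.{0}) (f : Ordinal.{0} → Ordinal.{0}) (A : Set Ordinal.{0}) : Prop :=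
  ∀ γ ∈ A, γ < κ → (γ ≠ 0 ∧ ∀ a < γ, Order.succ a < γ) → sSup (f '' Iio γ) < f γ

/-- `C` is club in `κ`: unbounded, and containing the supremum of each of its
bounded nonempty subsets without a maximum. -/
def IsClubIn (C : Set Ordinal.{0}) (κ : Ordinal.{0}) : Prop :=
  C ⊆ Iio κ ∧ (∀ β < κ, ∃ α ∈ C, β < α) ∧
    ∀ S, S ⊆ C → S.Nonempty → (∃ β < κ, ∀ x ∈ S, x ≤ β) → sSup S ∉ S → sSup S ∈ C

/-- `S` is stationary in `κ`: it meets every club subset of `κ`. -/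
def IsStationaryIn (S : Set Ordinal.{0}) (κ : Ordinal.{0}) : Prop :=
  S ⊆ Iio κ ∧ ∀ C, IsClubIn C κ → (S ∩ C).Nonempty

/-- An almost disjoint family in `∏ b`. -/
def AlmostDisjointFamily (κ : Ordinal.{0}) (b : Ordinal.{0} → Ordinal.{0})
    (A : Set (Ordinal.{0} → Ordinal.{0})) : Prop :=
  A ⊆ prodSet κ b ∧ ∀ f ∈ A, ∀ g ∈ A, f ≠ g → AlmostAll κ fun α => f α ≠ g α

/-! ### Auxiliary lemmas -/

abbrev _root_.Ordinal.IsLimit (o : Ordinal.{0}) : Prop := o ≠ 0 ∧ ∀ a < o, Order.succ a < o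

theorem _root_.Ordinal.IsLimit.pos {o : Ordinal.{0}} (h : o.IsLimit) : 0 < o :=
  pos_iff_ne_zero.2 h.1

theorem _root_.Ordinal.IsLimit.succ_lt {o a : Ordinal.{0}} (h : o.IsLimit) (ha : a < o) :
    Order.succ a < o := h.2 a ha

theorem _root_.Ordinal.IsLimit.isSuccLimit {o : Ordinal.{0}} (h : o.IsLimit) :
    Order.IsSuccLimit o :=
  Ordinal.isSuccLimit_iff.2 ⟨h.1, Order.isSuccPrelimit_iff_succ_lt.2 h.2⟩

theorem _root_.Cardinal.isLimit_ord {c : Cardinal.{0}} (hc : ℵ₀ ≤ c) : c.ord.IsLimit := by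
  have h := Cardinal.isSuccLimit_ord hc
  exact ⟨(Ordinal.isSuccLimit_iff.1 h).1, fun a ha => h.succ_lt ha⟩

section Helpers

variable {κ : Cardinal.{0}}

private lemma isLimit_of_isInfCard {o : Ordinal.{0}} (ho : IsInfCard o) : o.IsLimit := by
  have := Cardinal.isLimit_ord ho.2
  rwa [ho.1] at this

/-- Pigeonhole: a function on an unbounded subset of a regular `κ` with fewer than
`κ` many possible values is constant on an unbounded set. -/
private lemma pigeon (hreg : κ.IsRegular) {T : Set Ordinal.{0}}
    (hT : ∀ β < κ.ord, ∃ γ ∈ T, β < γ ∧ γ < κ.ord)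
    {v : Ordinal.{0} → Ordinal.{0}} {ρ : Ordinal.{0}} (hρ : ρ < κ.ord)
    (hv : ∀ γ ∈ T, γ < κ.ord → v γ < ρ) :
    ∃ j < ρ, ∀ β < κ.ord, ∃ γ ∈ T, β < γ ∧ γ < κ.ord ∧ v γ = j := by
  classical
  by_contra hcon
  push_neg at hcon
  choose! B hB1 hB2 using hcon
  have hsup : (⨆ x : ρ.ToType, B ((Ordinal.ToType.mk (o := ρ)).symm x : Ordinal.{0})) < κ.ord := by
    refine Ordinal.iSup_lt_ord ?_ ?_
    · rw [Cardinal.mk_toType, hreg.cof_eq]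
      exact Cardinal.lt_ord.1 hρ
    · intro x
      exact hB1 _ ((Ordinal.ToType.mk (o := ρ)).symm x).2
  obtain ⟨γ, hγT, hγgt, hγκ⟩ := hT _ hsup
  have hvγ := hv γ hγT hγκ
  have hle : B (v γ) ≤ ⨆ x : ρ.ToType, B ((Ordinal.ToType.mk (o := ρ)).symm x : Ordinal.{0}) := by
    have h1 := Ordinal.le_iSup (fun x : ρ.ToType => B ((Ordinal.ToType.mk (o := ρ)).symm x : Ordinal.{0}))
      (Ordinal.ToType.mk (o := ρ) ⟨v γ, hvγ⟩)
    simpa using h1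
  exact hB2 _ hvγ γ hγT (lt_of_le_of_lt hle hγgt) hγκ rfl

private noncomputable def iterSeq (B : Ordinal.{0} → Ordinal.{0}) (β : Ordinal.{0}) :
    ℕ → Ordinal.{0}
  | 0 => β + 1
  | (n+1) => max (iterSeq B β n + 1)
      (⨆ x : (iterSeq B β n).ToType,
        (B ((Ordinal.ToType.mk (o := (iterSeq B β n))).symm x : Ordinal.{0}) + 1))

/-- The set of closure points of a function `B` below a regular uncountable `κ` is club. -/
private lemma closure_club (hreg : κ.IsRegular) (hℵ : ℵ₀ < κ)
    (B : Ordinal.{0} → Ordinal.{0}) (hB : ∀ δ, B δ < κ.ord) :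
    IsClubIn {γ | γ < κ.ord ∧ γ.IsLimit ∧ ∀ δ < γ, B δ < γ} κ.ord := by
  have hklim : κ.ord.IsLimit := Cardinal.isLimit_ord hℵ.le
  refine ⟨fun γ hγ => hγ.1, ?_, ?_⟩
  · intro β hβ
    set g : ℕ → Ordinal.{0} := iterSeq B β with hg
    have hgκ : ∀ n, g n < κ.ord := by
      intro n
      induction n with
      | zero =>
        have : g 0 = β + 1 := rfl
        rw [this, Ordinal.add_one_eq_succ]
        exact hklim.succ_lt hβ
      | succ n ih =>
        have hstep : g (n+1) = max (g n + 1)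
            (⨆ x : (g n).ToType,
              (B ((Ordinal.ToType.mk (o := (g n))).symm x : Ordinal.{0}) + 1)) := rfl
        rw [hstep]
        apply max_lt
        · rw [Ordinal.add_one_eq_succ]; exact hklim.succ_lt ih
        · refine Ordinal.iSup_lt_ord ?_ ?_
          · rw [Cardinal.mk_toType, hreg.cof_eq]
            exact Cardinal.lt_ord.1 ih
          · intro x
            rw [Ordinal.add_one_eq_succ]
            exact hklim.succ_lt (hB _)
    have hmono : ∀ n, g n < g (n+1) := by
      intro n
      have hstep : g n + 1 ≤ g (n+1) := le_max_left _ _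
      have : g n < g n + 1 := by
        rw [Ordinal.add_one_eq_succ]; exact Order.lt_succ _
      exact lt_of_lt_of_le this hstep
    set γω := ⨆ n, g n with hγω
    have hγωκ : γω < κ.ord := by
      refine Ordinal.iSup_lt_ord ?_ hgκ
      rw [Cardinal.mk_nat, hreg.cof_eq]; exact hℵ
    have hgle : ∀ n, g n ≤ γω := fun n => Ordinal.le_iSup g n
    have hltγω : ∀ x, x < γω → ∃ n, x < g n := by
      intro x hx
      by_contra hc
      push_neg at hc
      exact absurd (Ordinal.iSup_le hc) (not_le.2 hx)
    have hγωlim : γω.IsLimit := by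
      constructor
      · intro h0
        have h1 : β < g 0 := by
          have he : g 0 = β + 1 := rfl
          rw [he, Ordinal.add_one_eq_succ]
          exact Order.lt_succ β
        have h2 := lt_of_lt_of_le h1 (hgle 0)
        rw [h0] at h2
        exact absurd h2 (by simp)
      · intro a ha
        obtain ⟨n, hn⟩ := hltγω a ha
        have : Order.succ a ≤ g n := Order.succ_le_of_lt hn
        exact lt_of_le_of_lt this (lt_of_lt_of_le (hmono n) (hgle (n+1)))
    refine ⟨γω, ⟨hγωκ, hγωlim, ?_⟩, ?_⟩
    · intro δ hδ
      obtain ⟨n, hn⟩ := hltγω δ hδ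
      have hmem : B δ + 1 ≤ ⨆ x : (g n).ToType,
          (B ((Ordinal.ToType.mk (o := (g n))).symm x : Ordinal.{0}) + 1) := by
        have h1 := Ordinal.le_iSup
          (fun x : (g n).ToType =>
            (B ((Ordinal.ToType.mk (o := (g n))).symm x : Ordinal.{0}) + 1))
          (Ordinal.ToType.mk (o := (g n)) ⟨δ, hn⟩)
        simpa using h1
      have hstep : (⨆ x : (g n).ToType,
          (B ((Ordinal.ToType.mk (o := (g n))).symm x : Ordinal.{0}) + 1)) ≤ g (n+1) :=
        le_max_right _ _
      have : B δ < B δ + 1 := by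
        rw [Ordinal.add_one_eq_succ]; exact Order.lt_succ _
      exact lt_of_lt_of_le this (hmem.trans (hstep.trans (hgle (n+1))))
    · have h1 : β < g 0 := by
        have he : g 0 = β + 1 := rfl
        rw [he, Ordinal.add_one_eq_succ]
        exact Order.lt_succ β
      exact lt_of_lt_of_le h1 (hgle 0)
  · intro S hS hSne hSbdd hSsup
    obtain ⟨β', hβ'κ, hβ'⟩ := hSbdd
    have hbdd : BddAbove S := ⟨β', fun x hx => hβ' x hx⟩
    have hsub : ∀ x ∈ S, x < sSup S := fun x hx =>
      lt_of_le_of_ne (le_csSup hbdd hx) (fun h => hSsup (h ▸ hx))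
    have hexlt : ∀ y, y < sSup S → ∃ x ∈ S, y < x := fun y hy =>
      exists_lt_of_lt_csSup hSne hy
    have hκ' : sSup S < κ.ord :=
      lt_of_le_of_lt (csSup_le hSne (fun x hx => hβ' x hx)) hβ'κ
    refine ⟨hκ', ?_, ?_⟩
    · constructor
      · intro h0
        obtain ⟨x, hx⟩ := hSne
        have := hsub x hx
        rw [h0] at this
        exact absurd this (by simp)
      · intro a ha
        obtain ⟨x, hxS, hax⟩ := hexlt a ha
        have hxlim : x.IsLimit := (hS hxS).2.1
        exact lt_of_lt_of_le (hxlim.succ_lt hax) (le_of_lt (hsub x hxS))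
    · intro δ hδ
      obtain ⟨x, hxS, hδx⟩ := hexlt δ hδ
      exact lt_of_lt_of_le ((hS hxS).2.2 δ hδx) (le_of_lt (hsub x hxS))

/-- Weak Fodor lemma: a regressive function on a stationary set is bounded on an
unbounded set. -/
private lemma weak_fodor (hreg : κ.IsRegular) (hℵ : ℵ₀ < κ)
    {S : Set Ordinal.{0}} (hS : IsStationaryIn S κ.ord)
    {r : Ordinal.{0} → Ordinal.{0}} (hr : ∀ γ ∈ S, γ.IsLimit → r γ < γ) :
    ∃ δ < κ.ord, ∀ β < κ.ord, ∃ γ ∈ S, γ.IsLimit ∧ β < γ ∧ γ < κ.ord ∧ r γ ≤ δ := by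
  classical
  by_contra hcon
  push_neg at hcon
  choose! B hB1 hB2 using hcon
  set B' : Ordinal.{0} → Ordinal.{0} := fun δ => if δ < κ.ord then B δ else 0 with hB'def
  have hB'κ : ∀ δ, B' δ < κ.ord := by
    intro δ
    by_cases hδ : δ < κ.ord
    · simpa [B', hδ] using hB1 δ hδ
    · simpa [B', hδ] using (Cardinal.isLimit_ord hℵ.le).pos
  obtain ⟨γ, hγS, hγκ, hγlim, hγcl⟩ := hS.2 _ (closure_club hreg hℵ B' hB'κ)
  have hrγ := hr γ hγS hγlim
  have hcl := hγcl (r γ) hrγ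
  have hrκ : r γ < κ.ord := hrγ.trans hγκ
  have hBcl : B (r γ) < γ := by
    rw [hB'def] at hcl
    simpa [hrκ] using hcl
  exact absurd le_rfl (not_le.2 (hB2 (r γ) hrκ γ hγS hγlim hBcl hγκ))

private noncomputable def altSeq (c d : Ordinal.{0} → Ordinal.{0}) (β : Ordinal.{0}) :
    ℕ → Ordinal.{0}
  | 0 => c β
  | (n+1) => if n % 2 = 0 then d (altSeq c d β n) else c (altSeq c d β n)

/-- The intersection of two clubs is club. -/
private lemma inter_club (hreg : κ.IsRegular) (hℵ : ℵ₀ < κ)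
    {C D : Set Ordinal.{0}} (hC : IsClubIn C κ.ord) (hD : IsClubIn D κ.ord) :
    IsClubIn (C ∩ D) κ.ord := by
  classical
  refine ⟨fun γ hγ => hC.1 hγ.1, ?_, ?_⟩
  · intro β hβ
    choose! cn hcnC hcngt using hC.2.1
    choose! dn hdnD hdngt using hD.2.1
    set g : ℕ → Ordinal.{0} := altSeq cn dn β with hgdef
    have hg0 : g 0 = cn β := rfl
    have hgsucc : ∀ n, g (n+1) = if n % 2 = 0 then dn (g n) else cn (g n) := fun n => rfl
    -- facts by induction
    have hfacts : ∀ n, g n < κ.ord ∧ β < g n ∧ (n % 2 = 0 → g n ∈ C) ∧ (n % 2 = 1 → g n ∈ D) := by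
      intro n
      induction n with
      | zero =>
        have h1 : cn β ∈ C := hcnC β hβ
        have h2 : β < cn β := hcngt β hβ
        exact ⟨hC.1 h1, h2, fun _ => h1, fun h => by omega⟩
      | succ n ih =>
        obtain ⟨ihκ, ihβ, ihC, ihD⟩ := ih
        by_cases hpar : n % 2 = 0
        · have he : g (n+1) = dn (g n) := by rw [hgsucc, if_pos hpar]
          have h1 : dn (g n) ∈ D := hdnD _ ihκ
          have h2 : g n < dn (g n) := hdngt _ ihκ
          refine ⟨by rw [he]; exact hD.1 h1, by rw [he]; exact ihβ.trans h2, ?_, ?_⟩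
          · intro hmod; omega
          · intro _; rw [he]; exact h1
        · have hpar1 : n % 2 = 1 := by omega
          have he : g (n+1) = cn (g n) := by rw [hgsucc, if_neg hpar]
          have h1 : cn (g n) ∈ C := hcnC _ ihκ
          have h2 : g n < cn (g n) := hcngt _ ihκ
          refine ⟨by rw [he]; exact hC.1 h1, by rw [he]; exact ihβ.trans h2, ?_, ?_⟩
          · intro _; rw [he]; exact h1
          · intro hmod; omega
    have hmono : ∀ n, g n < g (n+1) := by
      intro n
      by_cases hpar : n % 2 = 0
      · rw [hgsucc, if_pos hpar]; exact hdngt _ (hfacts n).1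
      · rw [hgsucc, if_neg hpar]; exact hcngt _ (hfacts n).1
    have hmonole : Monotone g := monotone_nat_of_le_succ (fun n => (hmono n).le)
    set γω := ⨆ n, g n with hγωdef
    have hγωκ : γω < κ.ord := by
      refine Ordinal.iSup_lt_ord ?_ (fun n => (hfacts n).1)
      rw [Cardinal.mk_nat, hreg.cof_eq]; exact hℵ
    have hgle : ∀ n, g n ≤ γω := fun n => Ordinal.le_iSup g n
    have hglt : ∀ n, g n < γω := fun n => lt_of_lt_of_le (hmono n) (hgle (n+1))
    -- γω is the sup of the C-members and of the D-members
    have hmem : ∀ (E : Set Ordinal.{0}), IsClubIn E κ.ord →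
        (∀ n, ∃ m, g n ≤ g m ∧ g m ∈ E) → γω ∈ E := by
      intro E hE hcof
      set SE := {x | ∃ m, x = g m ∧ g m ∈ E} with hSEdef
      have hSEsub : SE ⊆ E := by rintro x ⟨m, rfl, hm⟩; exact hm
      have hSEne : SE.Nonempty := by
        obtain ⟨m, _, hm⟩ := hcof 0
        exact ⟨g m, m, rfl, hm⟩
      have hSEbdd : ∃ β' < κ.ord, ∀ x ∈ SE, x ≤ β' := by
        refine ⟨γω, hγωκ, ?_⟩
        rintro x ⟨m, rfl, _⟩
        exact hgle m
      have hsup : sSup SE = γω := by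
        apply le_antisymm
        · apply csSup_le hSEne
          rintro x ⟨m, rfl, _⟩
          exact hgle m
        · apply Ordinal.iSup_le
          intro n
          obtain ⟨m, hnm, hm⟩ := hcof n
          exact hnm.trans (le_csSup ⟨γω, by rintro x ⟨m', rfl, _⟩; exact hgle m'⟩ ⟨m, rfl, hm⟩)
      have hnotmem : sSup SE ∉ SE := by
        rw [hsup]
        rintro ⟨m, heq, _⟩
        exact absurd heq.symm (ne_of_lt (hglt m))
      have := hE.2.2 SE hSEsub hSEne hSEbdd hnotmem
      rwa [hsup] at this
    have hγωC : γω ∈ C := by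
      refine hmem C hC ?_
      intro n
      refine ⟨2 * n + 2, hmonole (by omega), ?_⟩
      exact (hfacts (2*n+2)).2.2.1 (by omega)
    have hγωD : γω ∈ D := by
      refine hmem D hD ?_
      intro n
      refine ⟨2 * n + 1, hmonole (by omega), ?_⟩
      exact (hfacts (2*n+1)).2.2.2 (by omega)
    exact ⟨γω, ⟨hγωC, hγωD⟩, lt_of_lt_of_le (hfacts 0).2.1 (hgle 0)⟩
  · intro S hS hSne hSbdd hSsup
    have h1 : sSup S ∈ C := hC.2.2 S (fun x hx => (hS hx).1) hSne hSbdd hSsup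
    have h2 : sSup S ∈ D := hD.2.2 S (fun x hx => (hS hx).2) hSne hSbdd hSsup
    exact ⟨h1, h2⟩

/-- A cofinal enumeration of a limit ordinal indexed by ordinals below its cofinality. -/
private lemma exists_cof_enum (o : Ordinal.{0}) (ho : o.IsLimit) :
    ∃ c : Ordinal.{0} → Ordinal.{0}, (∀ j, c j < o) ∧
      ∀ x < o, ∃ j < o.cof.ord, x < c j := by
  classical
  obtain ⟨f, hf⟩ := Ordinal.exists_fundamental_sequence o
  refine ⟨fun j => if hj : j < o.cof.ord then f j hj + 1 else 1, ?_, ?_⟩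
  · intro j
    by_cases hj : j < o.cof.ord
    · simp only [dif_pos hj]
      rw [Ordinal.add_one_eq_succ]
      exact ho.succ_lt (hf.lt hj)
    · simp only [dif_neg hj]
      rw [show (1 : Ordinal.{0}) = Order.succ 0 from (Ordinal.succ_zero).symm]
      exact ho.succ_lt ho.pos
  · intro x hx
    have hblsub : x < Ordinal.blsub _ f := by rw [hf.blsub_eq]; exact hx
    obtain ⟨j, hj, hle⟩ := Ordinal.lt_blsub_iff.1 hblsub
    refine ⟨j, hj, ?_⟩
    simp only [dif_pos hj]
    rw [Ordinal.add_one_eq_succ]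
    exact Order.lt_succ_of_le hle

private lemma union_small_cof {c : Cardinal.{0}} (hc : ℵ₀ ≤ c) {ι : Type 1}
    (s : ι → Set Ordinal.{0}) {ν : Cardinal.{0}}
    (hι : #ι ≤ Cardinal.lift.{1} ν) (hν : ν < c.ord.cof)
    (hs : ∀ i, #(s i) < Cardinal.lift.{1} c) :
    #(⋃ i, s i) < Cardinal.lift.{1} c := by
  have hιc : #ι < Cardinal.lift.{1} c :=
    lt_of_le_of_lt hι (Cardinal.lift_lt.2 (lt_of_lt_of_le hν (Ordinal.cof_ord_le c)))
  have hsup : (⨆ i, #(s i)) < Cardinal.lift.{1} c := by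
    refine Ordinal.iSup_lt_lift.{1,0} ?_ hs
    rw [Cardinal.lift_id', ← Cardinal.lift_ord, ← Ordinal.lift_cof]
    exact lt_of_le_of_lt hι (Cardinal.lift_lt.2 hν)
  calc #(⋃ i, s i) ≤ #ι * ⨆ i, #(s i) := Cardinal.mk_iUnion_le s
    _ < Cardinal.lift.{1} c :=
      Cardinal.mul_lt_of_lt (by rwa [Cardinal.aleph0_le_lift]) hιc hsup

private lemma union_small_mul {c : Cardinal.{0}} (hc : ℵ₀ ≤ c) {ι : Type 1}
    (s : ι → Set Ordinal.{0}) {ν H : Cardinal.{0}}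
    (hι : #ι ≤ Cardinal.lift.{1} ν) (hν : ν < c) (hH : H < c)
    (hs : ∀ i, #(s i) ≤ Cardinal.lift.{1} H) :
    #(⋃ i, s i) < Cardinal.lift.{1} c := by
  calc #(⋃ i, s i) ≤ #ι * ⨆ i, #(s i) := Cardinal.mk_iUnion_le s
    _ ≤ Cardinal.lift.{1} ν * Cardinal.lift.{1} H := mul_le_mul' hι (ciSup_le' hs)
    _ = Cardinal.lift.{1} (ν * H) := (Cardinal.lift_mul ν H).symm
    _ < Cardinal.lift.{1} c := Cardinal.lift_lt.2 (Cardinal.mul_lt_of_lt hc hν hH)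

/-- Core lower-bound argument: no small family of slaloms is cofinally covering,
provided eventually the relevant unions are small. -/
private lemma covering_not_small
    {b h : Ordinal.{0} → Ordinal.{0}}
    (hb : ∀ α < κ.ord, b α < κ.ord ∧ IsInfCard (b α))
    (hh : ∀ α < κ.ord, IsCardOrd (h α) ∧ 2 ≤ h α ∧ h α ≤ b α)
    {W : Set (Ordinal.{0} → Set Ordinal.{0})} (hW : W ⊆ slalomSet κ.ord b h)
    (hcov : ∀ f ∈ prodSet κ.ord b, ∃ φ ∈ W, inInfty κ.ord f φ)
    {μ : Cardinal.{0}} (hWμ : #W ≤ Cardinal.lift.{1} μ)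
    {β₀ : Ordinal.{0}} (hβ₀ : β₀ < κ.ord)
    (hD : ∀ α, β₀ < α → α < κ.ord → μ < (b α).card ∧ (h α = b α → μ < (b α).cof)) :
    False := by
  classical
  have hb0 : ∀ α, α < κ.ord → 0 < b α := fun α hα =>
    (isLimit_of_isInfCard (hb α hα).2).pos
  set U : Ordinal.{0} → Set Ordinal.{0} :=
    fun α => ⋃ φ : W, (φ : Ordinal.{0} → Set Ordinal.{0}) α with hUdef
  have hUsmall : ∀ α, β₀ < α → α < κ.ord → #(U α) < Cardinal.lift.{1} (b α).card := by
    intro α hβα hακ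
    obtain ⟨hμb, hμcof⟩ := hD α hβα hακ
    have hbcard : ℵ₀ ≤ (b α).card := (hb α hακ).2.2
    by_cases hhb : h α = b α
    · refine union_small_cof hbcard _ hWμ ?_ ?_
      · rw [(hb α hακ).2.1]
        exact hμcof hhb
      · intro i
        have h1 := ((hW i.2 α).1 hακ).2
        rwa [hhb] at h1
    · have hhlt : h α < b α := lt_of_le_of_ne ((hh α hακ).2.2) hhb
      have hHc : (h α).card < (b α).card := by
        apply Cardinal.lt_ord.1
        rw [(hb α hακ).2.1]
        exact hhlt
      refine union_small_mul hbcard _ hWμ hμb hHc ?_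
      intro i
      exact le_of_lt ((hW i.2 α).1 hακ).2
  have hex : ∀ α, β₀ < α → α < κ.ord → ∃ x, x < b α ∧ x ∉ U α := by
    intro α hβα hακ
    by_contra hc
    push_neg at hc
    have hsub : Iio (b α) ⊆ U α := fun x hx => hc x hx
    have hle := Cardinal.mk_le_mk_of_subset hsub
    rw [Ordinal.mk_Iio_ordinal] at hle
    exact absurd (lt_of_le_of_lt hle (hUsmall α hβα hακ)) (lt_irrefl _)
  choose! F hF1 hF2 using hex
  set f : Ordinal.{0} → Ordinal.{0} :=
    fun α => if β₀ < α ∧ α < κ.ord then F α else 0 with hfdef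
  have hfP : f ∈ prodSet κ.ord b := by
    intro α
    constructor
    · intro hακ
      by_cases hβα : β₀ < α
      · have : f α = F α := by simp [hfdef, hβα, hακ]
        rw [this]
        exact hF1 α hβα hακ
      · have : f α = 0 := by simp [hfdef, hβα]
        rw [this]
        exact hb0 α hακ
    · intro hακ
      simp [hfdef, hακ]
  obtain ⟨φ, hφW, hφ⟩ := hcov f hfP
  obtain ⟨α, hβα, hακ, hmem⟩ := hφ β₀ hβ₀
  have hne : f α ∉ U α := by
    have : f α = F α := by simp [hfdef, hβα, hακ]
    rw [this]
    exact hF2 α hβα hακ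
  exact hne (Set.mem_iUnion.2 ⟨⟨φ, hφW⟩, hmem⟩)

private lemma normOf_eq_of {X Y : Type*} {Xs : Set X} {Ys : Set Y} {R : X → Y → Prop}
    {c : Cardinal} (hub : ∃ W, W ⊆ Ys ∧ (∀ x ∈ Xs, ∃ y ∈ W, R x y) ∧ #W ≤ c)
    (hlb : ∀ W, W ⊆ Ys → (∀ x ∈ Xs, ∃ y ∈ W, R x y) → c ≤ #W) :
    normOf Xs Ys R = c := by
  obtain ⟨W, hW1, hW2, hW3⟩ := hub
  have heq : (#W : Cardinal) = c := le_antisymm hW3 (hlb W hW1 hW2)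
  apply le_antisymm
  · exact csInf_le (OrderBot.bddBelow _) ⟨W, hW1, hW2, heq.symm⟩
  · refine le_csInf ⟨#W, W, hW1, hW2, rfl⟩ ?_
    rintro d ⟨W', h1, h2, rfl⟩
    exact hlb W' h1 h2

private lemma le_normOf {X Y : Type*} {Xs : Set X} {Ys : Set Y} {R : X → Y → Prop}
    {c : Cardinal} (hne : ∃ W, W ⊆ Ys ∧ (∀ x ∈ Xs, ∃ y ∈ W, R x y))
    (hlb : ∀ W, W ⊆ Ys → (∀ x ∈ Xs, ∃ y ∈ W, R x y) → c ≤ #W) :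
    c ≤ normOf Xs Ys R := by
  obtain ⟨W, hW1, hW2⟩ := hne
  refine le_csInf ⟨#W, W, hW1, hW2, rfl⟩ ?_
  rintro d ⟨W', h1, h2, rfl⟩
  exact hlb W' h1 h2

private lemma two_le_lift_card {o : Ordinal.{0}} (h2 : 2 ≤ o) :
    (1 : Cardinal.{1}) < Cardinal.lift.{1} o.card := by
  have h1 : (2 : Cardinal.{0}) ≤ o.card := by
    have := Ordinal.card_le_card h2
    simpa using this
  have h3 : (1 : Cardinal.{0}) < o.card := lt_of_lt_of_le one_lt_two h1
  rw [← Cardinal.lift_one.{0,1}]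
  exact Cardinal.lift_lt.2 h3

/-- The collection of all slaloms is cofinally covering. -/
private lemma slalom_covering (hℵ : ℵ₀ ≤ κ) {b h : Ordinal.{0} → Ordinal.{0}}
    (hh2 : ∀ α < κ.ord, 2 ≤ h α) :
    ∀ f ∈ prodSet κ.ord b, ∃ φ ∈ slalomSet κ.ord b h, inInfty κ.ord f φ := by
  classical
  intro f hf
  refine ⟨fun α => if α < κ.ord then {f α} else ∅, ?_, ?_⟩
  · intro α
    constructor
    · intro hακ
      simp only [if_pos hακ]
      constructor
      · intro x hx
        rw [Set.mem_singleton_iff] at hx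
        rw [hx]
        exact (hf α).1 hακ
      · rw [Cardinal.mk_singleton]
        exact two_le_lift_card (hh2 α hακ)
    · intro hακ
      simp [hακ]
  · intro β hβ
    have hlim := Cardinal.isLimit_ord hℵ
    have h1 : β < Order.succ β := Order.lt_succ β
    have h2 : Order.succ β < κ.ord := hlim.succ_lt hβ
    exact ⟨Order.succ β, h1, h2, by simp [lt_of_eq_of_lt (Ordinal.add_one_eq_succ β) h2]⟩

/-- The family of constant singleton slaloms indexed below `ρ`. -/
private lemma singleton_family_covers
    {b h : Ordinal.{0} → Ordinal.{0}}
    (hb : ∀ α < κ.ord, b α < κ.ord ∧ IsInfCard (b α))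
    (hh : ∀ α < κ.ord, IsCardOrd (h α) ∧ 2 ≤ h α ∧ h α ≤ b α)
    {ρ : Ordinal.{0}}
    (hcover : ∀ f ∈ prodSet κ.ord b, ∃ γ < ρ, ∀ β < κ.ord,
        ∃ α, β < α ∧ α < κ.ord ∧ f α = γ ∧ γ < b α) :
    ∃ W, W ⊆ slalomSet κ.ord b h ∧ (∀ f ∈ prodSet κ.ord b, ∃ φ ∈ W, inInfty κ.ord f φ) ∧
      #W ≤ Cardinal.lift.{1} ρ.card := by
  classical
  have hb0 : ∀ α, α < κ.ord → 0 < b α := fun α hα =>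
    (isLimit_of_isInfCard (hb α hα).2).pos
  set ψ : Ordinal.{0} → (Ordinal.{0} → Set Ordinal.{0}) := fun γ α =>
    if α < κ.ord then (if γ < b α then {γ} else {0}) else ∅ with hψdef
  refine ⟨ψ '' Iio ρ, ?_, ?_, ?_⟩
  · rintro _ ⟨γ, hγ, rfl⟩
    intro α
    constructor
    · intro hακ
      constructor
      · by_cases hγb : γ < b α
        · simp only [hψdef, if_pos hακ, if_pos hγb, Set.singleton_subset_iff]
          exact hγb
        · simp only [hψdef, if_pos hακ, if_neg hγb, Set.singleton_subset_iff]
          exact hb0 α hακ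
      · have hle : #(ψ γ α) = 1 := by
          by_cases hγb : γ < b α
          · simp [hψdef, hακ, hγb]
          · simp [hψdef, hακ, hγb]
        rw [hle]
        exact two_le_lift_card (hh α hακ).2.1
    · intro hακ
      simp [hψdef, hακ]
  · intro f hf
    obtain ⟨γ, hγρ, hγ⟩ := hcover f hf
    refine ⟨ψ γ, ⟨γ, hγρ, rfl⟩, ?_⟩
    intro β hβ
    obtain ⟨α, hβα, hακ, hfγ, hγb⟩ := hγ β hβ
    refine ⟨α, hβα, hακ, ?_⟩
    simp [hψdef, hακ, hγb, hfγ]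
  · calc #(ψ '' Iio ρ) ≤ #(Iio ρ) := Cardinal.mk_image_le
      _ = Cardinal.lift.{1} ρ.card := Ordinal.mk_Iio_ordinal ρ

/-- The family of initial-segment slaloms along a system of cofinal enumerations. -/
private lemma interval_family_covers
    {b h : Ordinal.{0} → Ordinal.{0}}
    (hb : ∀ α < κ.ord, b α < κ.ord ∧ IsInfCard (b α))
    (hh : ∀ α < κ.ord, IsCardOrd (h α) ∧ 2 ≤ h α ∧ h α ≤ b α)
    (C : Ordinal.{0} → Ordinal.{0} → Ordinal.{0})
    (hC : ∀ α, α < κ.ord → ∀ j, C α j < b α)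
    {ρ : Ordinal.{0}}
    (hcover : ∀ f ∈ prodSet κ.ord b, ∃ j < ρ, ∀ β < κ.ord, ∃ α, β < α ∧ α < κ.ord ∧
        h α = b α ∧ j < (b α).cof.ord ∧ f α < C α j) :
    ∃ W, W ⊆ slalomSet κ.ord b h ∧ (∀ f ∈ prodSet κ.ord b, ∃ φ ∈ W, inInfty κ.ord f φ) ∧
      #W ≤ Cardinal.lift.{1} ρ.card := by
  classical
  have hb0 : ∀ α, α < κ.ord → 0 < b α := fun α hα =>
    (isLimit_of_isInfCard (hb α hα).2).pos
  set ψ : Ordinal.{0} → (Ordinal.{0} → Set Ordinal.{0}) := fun j α =>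
    if α < κ.ord then
      (if j < (b α).cof.ord ∧ h α = b α then Iio (C α j) else {0}) else ∅ with hψdef
  refine ⟨ψ '' Iio ρ, ?_, ?_, ?_⟩
  · rintro _ ⟨j, hj, rfl⟩
    intro α
    constructor
    · intro hακ
      by_cases hcond : j < (b α).cof.ord ∧ h α = b α
      · have he : ψ j α = Iio (C α j) := by simp [hψdef, hακ, hcond]
        rw [he]
        constructor
        · intro x hx
          exact lt_trans hx (hC α hακ j)
        · rw [Ordinal.mk_Iio_ordinal]
          apply Cardinal.lift_lt.2
          apply Cardinal.lt_ord.1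
          rw [hcond.2, (hb α hακ).2.1]
          exact hC α hακ j
      · have he : ψ j α = {0} := by simp [hψdef, hακ, hcond]
        rw [he]
        constructor
        · intro x hx
          rw [Set.mem_singleton_iff] at hx
          rw [hx]
          exact hb0 α hακ
        · rw [Cardinal.mk_singleton]
          exact two_le_lift_card (hh α hακ).2.1
    · intro hακ
      simp [hψdef, hακ]
  · intro f hf
    obtain ⟨j, hjρ, hj⟩ := hcover f hf
    refine ⟨ψ j, ⟨j, hjρ, rfl⟩, ?_⟩
    intro β hβ
    obtain ⟨α, hβα, hακ, hhb, hjcof, hfC⟩ := hj β hβ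
    refine ⟨α, hβα, hακ, ?_⟩
    show f α ∈ ψ j α
    have he : ψ j α = Iio (C α j) := by simp [hψdef, hακ, hjcof, hhb]
    rw [he]
    exact hfC
  · calc #(ψ '' Iio ρ) ≤ #(Iio ρ) := Cardinal.mk_image_le
      _ = Cardinal.lift.{1} ρ.card := Ordinal.mk_Iio_ordinal ρ

end Helpers
/-- Triviality trichotomy for the antilocalisation number `b_κ^{b,h}(∌^∞)`,
with `D_λ = {α < κ : b α ≤ λ} ∪ {α < κ : h α = b α ∧ cf(b α) ≤ λ}`. -/
theorem stmt9 (κ : Cardinal.{0}) (hκ : κ.IsInaccessible)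
    (b h : Ordinal.{0} → Ordinal.{0})
    (hbinc : IncreasingOn κ.ord b) (hhinc : IncreasingOn κ.ord h)
    (hb : ∀ α < κ.ord, b α < κ.ord ∧ IsInfCard (b α))
    (hh : ∀ α < κ.ord, IsCardOrd (h α) ∧ 2 ≤ h α ∧ h α ≤ b α) :
    (∀ lam : Cardinal.{0}, lam < κ →
      Cofinally κ.ord (fun α => b α ≤ lam.ord ∨ (h α = b α ∧ (b α).cof ≤ lam)) →
      (∀ mu : Cardinal.{0}, mu < κ →
        Cofinally κ.ord (fun α => b α ≤ mu.ord ∨ (h α = b α ∧ (b α).cof ≤ mu)) →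
        lam ≤ mu) →
      bAntiLoc κ.ord b h = Cardinal.lift.{1} lam) ∧
    ((∀ lam : Cardinal.{0}, lam < κ →
        BoundedIn κ.ord (fun α => b α ≤ lam.ord ∨ (h α = b α ∧ (b α).cof ≤ lam))) →
      (∃ S, IsStationaryIn S κ.ord ∧
        (ContinuousOn κ.ord b S ∨
          ∀ ξ ∈ S, ∃ α, ξ ≤ α ∧ α < κ.ord ∧ h α = b α ∧ (b α).cof.ord ≤ ξ)) →
      bAntiLoc κ.ord b h = Cardinal.lift.{1} κ) ∧
    ((∀ lam : Cardinal.{0}, lam < κ →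
        BoundedIn κ.ord (fun α => b α ≤ lam.ord ∨ (h α = b α ∧ (b α).cof ≤ lam))) →
      (∃ C, IsClubIn C κ.ord ∧ DiscontinuousOn κ.ord b C ∧
        ∀ ξ ∈ C, ∀ α, ξ ≤ α → α < κ.ord → h α = b α → ξ < (b α).cof.ord) →
      Cardinal.lift.{1} (Order.succ κ) ≤ bAntiLoc κ.ord b h) := by
  classical
  obtain ⟨hℵ, hreg, _hsl⟩ := isInaccessible_def.1 hκ
  have hℵle : ℵ₀ ≤ κ := hℵ.le
  have hκlim : κ.ord.IsLimit := Cardinal.isLimit_ord hℵle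
  have hκpos : (0 : Ordinal.{0}) < κ.ord := hκlim.pos
  have hb0 : ∀ α, α < κ.ord → 0 < b α := fun α hα =>
    (isLimit_of_isInfCard (hb α hα).2).pos
  have notCof : ∀ (P : Ordinal.{0} → Prop), ¬ Cofinally κ.ord P →
      ∃ β < κ.ord, ∀ α, β < α → α < κ.ord → ¬ P α := by
    intro P hP
    unfold Cofinally at hP
    push_neg at hP
    exact hP
  have digest : ∀ (μ : Cardinal.{0}) (β₀ : Ordinal.{0}), β₀ < κ.ord →
      (∀ α, β₀ < α → α < κ.ord → ¬ (b α ≤ μ.ord ∨ (h α = b α ∧ (b α).cof ≤ μ))) →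
      ∀ α, β₀ < α → α < κ.ord → μ < (b α).card ∧ (h α = b α → μ < (b α).cof) := by
    intro μ β₀ _hβ₀ hnb α hβα hακ
    have hnb' := hnb α hβα hακ
    push_neg at hnb'
    obtain ⟨h1, h2⟩ := hnb'
    constructor
    · have h3 : μ.ord < b α := h1
      rw [← (hb α hακ).2.1] at h3
      exact Cardinal.ord_lt_ord.1 h3
    · intro hhb
      exact h2 hhb
  have lower : ∀ (W : Set (Ordinal.{0} → Set Ordinal.{0})), W ⊆ slalomSet κ.ord b h →
      (∀ f ∈ prodSet κ.ord b, ∃ φ ∈ W, inInfty κ.ord f φ) →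
      ∀ μ₀ : Cardinal.{0}, #W ≤ Cardinal.lift.{1} μ₀ → μ₀ < κ →
      (ℵ₀ ≤ μ₀ →
        ¬ Cofinally κ.ord (fun α => b α ≤ μ₀.ord ∨ (h α = b α ∧ (b α).cof ≤ μ₀))) →
      False := by
    intro W hWsub hWcov μ₀ hWμ hμκ hnc
    by_cases hfin : ℵ₀ ≤ μ₀
    · obtain ⟨β₀, hβ₀, hall⟩ := notCof _ (hnc hfin)
      exact covering_not_small hb hh hWsub hWcov hWμ hβ₀ (digest μ₀ β₀ hβ₀ hall)
    · refine covering_not_small hb hh hWsub hWcov hWμ hκpos ?_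
      intro α _h0α hακ
      have hμℵ : μ₀ < ℵ₀ := lt_of_not_ge hfin
      constructor
      · exact lt_of_lt_of_le hμℵ (hb α hακ).2.2
      · intro _hhb
        have h4 : ℵ₀ ≤ (b α).cof :=
          Ordinal.aleph0_le_cof.2 (isLimit_of_isInfCard (hb α hακ).2).isSuccLimit
        exact lt_of_lt_of_le hμℵ h4
  refine ⟨?_, ?_, ?_⟩
  · -- Part (i)
    intro lam hlamκ hcof hmin
    have hlam_ord : lam.ord < κ.ord := Cardinal.ord_lt_ord.2 hlamκ
    have hub : ∃ W, W ⊆ slalomSet κ.ord b h ∧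
        (∀ f ∈ prodSet κ.ord b, ∃ φ ∈ W, inInfty κ.ord f φ) ∧
        #W ≤ Cardinal.lift.{1} lam := by
      have hsplit : Cofinally κ.ord (fun α => b α ≤ lam.ord) ∨
          Cofinally κ.ord (fun α => h α = b α ∧ (b α).cof ≤ lam) := by
        by_contra hns
        push_neg at hns
        obtain ⟨β₁, hβ₁, h1⟩ := notCof _ hns.1
        obtain ⟨β₂, hβ₂, h2⟩ := notCof _ hns.2
        have hmax : max β₁ β₂ < κ.ord := max_lt hβ₁ hβ₂
        obtain ⟨α, hα1, hα2, hP⟩ := hcof _ hmax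
        rcases hP with hP | hP
        · exact h1 α (lt_of_le_of_lt (le_max_left β₁ β₂) hα1) hα2 hP
        · exact h2 α (lt_of_le_of_lt (le_max_right β₁ β₂) hα1) hα2 hP
      rcases hsplit with hc1 | hc2
      · have hcover : ∀ f ∈ prodSet κ.ord b, ∃ γ < lam.ord, ∀ β < κ.ord,
            ∃ α, β < α ∧ α < κ.ord ∧ f α = γ ∧ γ < b α := by
          intro f hf
          set T : Set Ordinal.{0} := {α | α < κ.ord ∧ b α ≤ lam.ord} with hTdef
          have hT : ∀ β < κ.ord, ∃ γ ∈ T, β < γ ∧ γ < κ.ord := by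
            intro β hβ
            obtain ⟨α, h1, h2, h3⟩ := hc1 β hβ
            exact ⟨α, ⟨h2, h3⟩, h1, h2⟩
          have hv : ∀ γ ∈ T, γ < κ.ord → f γ < lam.ord := by
            intro γ hγ _
            exact lt_of_lt_of_le ((hf γ).1 hγ.1) hγ.2
          obtain ⟨γv, hγρ, hγv⟩ := pigeon hreg hT hlam_ord hv
          refine ⟨γv, hγρ, ?_⟩
          intro β hβ
          obtain ⟨α, _hαT, hβα, hακ, hfα⟩ := hγv β hβ
          exact ⟨α, hβα, hακ, hfα, by rw [← hfα]; exact (hf α).1 hακ⟩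
        obtain ⟨W, hW1, hW2, hW3⟩ := singleton_family_covers hb hh hcover
        refine ⟨W, hW1, hW2, ?_⟩
        rwa [Cardinal.card_ord] at hW3
      · have hce : ∀ α : Ordinal.{0}, ∃ c : Ordinal.{0} → Ordinal.{0},
            α < κ.ord → ((∀ j, c j < b α) ∧ ∀ x < b α, ∃ j < (b α).cof.ord, x < c j) := by
          intro α
          by_cases hα : α < κ.ord
          · obtain ⟨c, hc1', hc2'⟩ := exists_cof_enum (b α) (isLimit_of_isInfCard (hb α hα).2)
            exact ⟨c, fun _ => ⟨hc1', hc2'⟩⟩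
          · exact ⟨fun _ => 0, fun hcon => absurd hcon hα⟩
        choose Cc hCc using hce
        have hCc1 : ∀ α, α < κ.ord → ∀ j, Cc α j < b α := fun α hα => (hCc α hα).1
        have hCc2 : ∀ α, α < κ.ord → ∀ x < b α, ∃ j < (b α).cof.ord, x < Cc α j :=
          fun α hα => (hCc α hα).2
        have hcover : ∀ f ∈ prodSet κ.ord b, ∃ j < lam.ord, ∀ β < κ.ord,
            ∃ α, β < α ∧ α < κ.ord ∧ h α = b α ∧ j < (b α).cof.ord ∧ f α < Cc α j := by
          intro f hf
          set T : Set Ordinal.{0} := {α | α < κ.ord ∧ h α = b α ∧ (b α).cof ≤ lam}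
            with hTdef
          have hT : ∀ β < κ.ord, ∃ γ ∈ T, β < γ ∧ γ < κ.ord := by
            intro β hβ
            obtain ⟨α, h1, h2, h3⟩ := hc2 β hβ
            exact ⟨α, ⟨h2, h3⟩, h1, h2⟩
          set v : Ordinal.{0} → Ordinal.{0} := fun α =>
            sInf {j | j < (b α).cof.ord ∧ f α < Cc α j} with hvdef
          have hvmem : ∀ α ∈ T, v α < (b α).cof.ord ∧ f α < Cc α (v α) := by
            intro α hα
            have hne : {j | j < (b α).cof.ord ∧ f α < Cc α j}.Nonempty := by
              obtain ⟨j, hj1, hj2⟩ := hCc2 α hα.1 (f α) ((hf α).1 hα.1)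
              exact ⟨j, hj1, hj2⟩
            exact csInf_mem hne
          have hv : ∀ γ ∈ T, γ < κ.ord → v γ < lam.ord := by
            intro γ hγ _
            exact lt_of_lt_of_le (hvmem γ hγ).1 (Cardinal.ord_le_ord.2 hγ.2.2)
          obtain ⟨j, hjρ, hj⟩ := pigeon hreg hT hlam_ord hv
          refine ⟨j, hjρ, ?_⟩
          intro β hβ
          obtain ⟨α, hαT, hβα, hακ, hvj⟩ := hj β hβ
          obtain ⟨hm1, hm2⟩ := hvmem α hαT
          rw [hvj] at hm1 hm2
          exact ⟨α, hβα, hακ, hαT.2.1, hm1, hm2⟩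
        obtain ⟨W, hW1, hW2, hW3⟩ := interval_family_covers hb hh Cc hCc1 hcover
        refine ⟨W, hW1, hW2, ?_⟩
        rwa [Cardinal.card_ord] at hW3
    refine normOf_eq_of hub ?_
    intro W hW1 hW2
    by_contra hlt
    push_neg at hlt
    obtain ⟨μ₀, hμ₀⟩ := Cardinal.mem_range_lift_of_le hlt.le
    have hμ₀lam : μ₀ < lam := by
      have := hlt
      rw [← hμ₀] at this
      exact Cardinal.lift_lt.1 this
    refine lower W hW1 hW2 μ₀ (le_of_eq hμ₀.symm) (hμ₀lam.trans hlamκ) ?_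
    intro _hμℵ hcofμ
    exact absurd (hmin μ₀ (hμ₀lam.trans hlamκ) hcofμ) (not_le.2 hμ₀lam)
  · -- Part (ii)
    intro hDlam hstat
    obtain ⟨S, hS, hcase⟩ := hstat
    have hub : ∃ W, W ⊆ slalomSet κ.ord b h ∧
        (∀ f ∈ prodSet κ.ord b, ∃ φ ∈ W, inInfty κ.ord f φ) ∧
        #W ≤ Cardinal.lift.{1} κ := by
      rcases hcase with hcont | hguess
      · -- case (a): b continuous on S, use singleton slaloms
        have hcover : ∀ f ∈ prodSet κ.ord b, ∃ γ < κ.ord, ∀ β < κ.ord,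
            ∃ α, β < α ∧ α < κ.ord ∧ f α = γ ∧ γ < b α := by
          intro f hf
          set r : Ordinal.{0} → Ordinal.{0} := fun γ =>
            sInf {δ | δ < γ ∧ f γ < b δ} with hrdef
          have hrmem : ∀ γ ∈ S, γ.IsLimit → r γ < γ ∧ f γ < b (r γ) := by
            intro γ hγ hlim
            have hγκ : γ < κ.ord := hS.1 hγ
            have hne : {δ | δ < γ ∧ f γ < b δ}.Nonempty := by
              have hcγ := hcont γ hγ hγκ hlim
              have hflt : f γ < sSup (b '' Iio γ) := by
                rw [← hcγ]; exact (hf γ).1 hγκ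
              have hne' : (b '' Iio γ).Nonempty :=
                ⟨b 0, Set.mem_image_of_mem b (Set.mem_Iio.2 hlim.pos)⟩
              obtain ⟨y, hy, hfy⟩ := exists_lt_of_lt_csSup hne' hflt
              obtain ⟨δ, hδγ, rfl⟩ := hy
              exact ⟨δ, hδγ, hfy⟩
            exact csInf_mem hne
          obtain ⟨δ₀, hδ₀κ, hδ₀⟩ := weak_fodor hreg hℵ hS
            (fun γ hγ hlim => (hrmem γ hγ hlim).1)
          set T : Set Ordinal.{0} := {γ | γ ∈ S ∧ γ.IsLimit ∧ r γ ≤ δ₀} with hTdef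
          have hT : ∀ β < κ.ord, ∃ γ ∈ T, β < γ ∧ γ < κ.ord := by
            intro β hβ
            obtain ⟨γ, h1, h2, h3, h4, h5⟩ := hδ₀ β hβ
            exact ⟨γ, ⟨h1, h2, h5⟩, h3, h4⟩
          have hρ : b δ₀ < κ.ord := (hb δ₀ hδ₀κ).1
          have hv : ∀ γ ∈ T, γ < κ.ord → f γ < b δ₀ := by
            intro γ hγ _
            exact lt_of_lt_of_le (hrmem γ hγ.1 hγ.2.1).2
              (hbinc (r γ) δ₀ hγ.2.2 hδ₀κ)
          obtain ⟨i, hiρ, hi⟩ := pigeon hreg hT hρ hv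
          refine ⟨i, hiρ.trans hρ, ?_⟩
          intro β hβ
          obtain ⟨γ, _hγT, hβγ, hγκ, hfi⟩ := hi β hβ
          exact ⟨γ, hβγ, hγκ, hfi, by rw [← hfi]; exact (hf γ).1 hγκ⟩
        obtain ⟨W, hW1, hW2, hW3⟩ := singleton_family_covers hb hh hcover
        refine ⟨W, hW1, hW2, ?_⟩
        rwa [Cardinal.card_ord] at hW3
      · -- case (b): guessing positions with full slaloms
        choose! a ha1 ha2 ha3 ha4 using hguess
        have hce : ∀ α : Ordinal.{0}, ∃ c : Ordinal.{0} → Ordinal.{0},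
            α < κ.ord → ((∀ j, c j < b α) ∧ ∀ x < b α, ∃ j < (b α).cof.ord, x < c j) := by
          intro α
          by_cases hα : α < κ.ord
          · obtain ⟨c, hc1', hc2'⟩ := exists_cof_enum (b α) (isLimit_of_isInfCard (hb α hα).2)
            exact ⟨c, fun _ => ⟨hc1', hc2'⟩⟩
          · exact ⟨fun _ => 0, fun hcon => absurd hcon hα⟩
        choose Cc hCc using hce
        have hCc1 : ∀ α, α < κ.ord → ∀ j, Cc α j < b α := fun α hα => (hCc α hα).1
        have hCc2 : ∀ α, α < κ.ord → ∀ x < b α, ∃ j < (b α).cof.ord, x < Cc α j :=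
          fun α hα => (hCc α hα).2
        have hcover : ∀ f ∈ prodSet κ.ord b, ∃ j < κ.ord, ∀ β < κ.ord,
            ∃ α, β < α ∧ α < κ.ord ∧ h α = b α ∧ j < (b α).cof.ord ∧ f α < Cc α j := by
          intro f hf
          set r : Ordinal.{0} → Ordinal.{0} := fun ξ =>
            sInf {j | j < (b (a ξ)).cof.ord ∧ f (a ξ) < Cc (a ξ) j} with hrdef
          have hrmem : ∀ ξ ∈ S, r ξ < (b (a ξ)).cof.ord ∧ f (a ξ) < Cc (a ξ) (r ξ) := by
            intro ξ hξ
            have haκ : a ξ < κ.ord := ha2 ξ hξ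
            have hne : {j | j < (b (a ξ)).cof.ord ∧ f (a ξ) < Cc (a ξ) j}.Nonempty := by
              obtain ⟨j, hj1, hj2⟩ := hCc2 (a ξ) haκ (f (a ξ)) ((hf (a ξ)).1 haκ)
              exact ⟨j, hj1, hj2⟩
            exact csInf_mem hne
          have hr : ∀ ξ ∈ S, ξ.IsLimit → r ξ < ξ := fun ξ hξ _ =>
            lt_of_lt_of_le (hrmem ξ hξ).1 (ha4 ξ hξ)
          obtain ⟨j₀, hj₀κ, hj₀⟩ := weak_fodor hreg hℵ hS hr
          set T : Set Ordinal.{0} := {ξ | ξ ∈ S ∧ ξ.IsLimit ∧ r ξ ≤ j₀} with hTdef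
          have hT : ∀ β < κ.ord, ∃ γ ∈ T, β < γ ∧ γ < κ.ord := by
            intro β hβ
            obtain ⟨γ, h1, h2, h3, h4, h5⟩ := hj₀ β hβ
            exact ⟨γ, ⟨h1, h2, h5⟩, h3, h4⟩
          have hρ : j₀ + 1 < κ.ord := by
            rw [Ordinal.add_one_eq_succ]; exact hκlim.succ_lt hj₀κ
          have hv : ∀ ξ ∈ T, ξ < κ.ord → r ξ < j₀ + 1 := by
            intro ξ hξ _
            rw [Ordinal.add_one_eq_succ]
            exact Order.lt_succ_of_le hξ.2.2
          obtain ⟨js, hjsρ, hjs⟩ := pigeon hreg hT hρ hv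
          refine ⟨js, hjsρ.trans hρ, ?_⟩
          intro β hβ
          obtain ⟨ξ, hξT, hβξ, hξκ, hrξ⟩ := hjs β hβ
          obtain ⟨hm1, hm2⟩ := hrmem ξ hξT.1
          rw [hrξ] at hm1 hm2
          refine ⟨a ξ, lt_of_lt_of_le hβξ (ha1 ξ hξT.1), ha2 ξ hξT.1, ha3 ξ hξT.1, hm1, hm2⟩
        obtain ⟨W, hW1, hW2, hW3⟩ := interval_family_covers hb hh Cc hCc1 hcover
        refine ⟨W, hW1, hW2, ?_⟩
        rwa [Cardinal.card_ord] at hW3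
    refine normOf_eq_of hub ?_
    intro W hW1 hW2
    by_contra hlt
    push_neg at hlt
    obtain ⟨μ₀, hμ₀⟩ := Cardinal.mem_range_lift_of_le hlt.le
    have hμ₀κ : μ₀ < κ := by
      have h5 := hlt
      rw [← hμ₀] at h5
      exact Cardinal.lift_lt.1 h5
    refine lower W hW1 hW2 μ₀ (le_of_eq hμ₀.symm) hμ₀κ ?_
    intro _hμℵ hcofμ
    obtain ⟨β₀, hβ₀, hbound⟩ := hDlam μ₀ hμ₀κ
    obtain ⟨α, h1, h2, h3⟩ := hcofμ β₀ hβ₀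
    exact absurd (hbound α h2 h3) (not_lt.2 h1.le)
  · -- Part (iii)
    intro hDlam hclub
    obtain ⟨Cb, hCbclub, hCbdisc, hCbcof⟩ := hclub
    apply le_normOf
    · exact ⟨slalomSet κ.ord b h, subset_rfl,
        slalom_covering hℵle (fun α hα => (hh α hα).2.1)⟩
    · intro W hWsub hWcov
      by_contra hnle
      push_neg at hnle
      rw [Cardinal.lift_succ] at hnle
      have hWκ : #W ≤ Cardinal.lift.{1} κ := Order.lt_succ_iff.1 hnle
      have hf0 : (fun _ : Ordinal.{0} => (0 : Ordinal.{0})) ∈ prodSet κ.ord b := by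
        intro α
        exact ⟨fun hα => hb0 α hα, fun _ => rfl⟩
      obtain ⟨φ₀, hφ₀W, _⟩ := hWcov _ hf0
      have hWneType : Nonempty ↥W := ⟨⟨φ₀, hφ₀W⟩⟩
      have hle : #W ≤ #(Iio κ.ord) := by
        rw [Ordinal.mk_Iio_ordinal, Cardinal.card_ord]
        exact hWκ
      obtain ⟨e⟩ := Cardinal.le_def _ _ |>.1 hle
      set σ : ↥(Iio κ.ord) → ↥W := Function.invFun e with hσdef
      have hσsurj : Function.Surjective σ := Function.invFun_surjective e.injective
      have hBde : ∀ δ : Ordinal.{0}, ∃ β, β < κ.ord ∧ (δ < κ.ord → ∀ α, α < κ.ord →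
          (b α ≤ δ.card.ord ∨ (h α = b α ∧ (b α).cof ≤ δ.card)) → α < β) := by
        intro δ
        by_cases hδ : δ < κ.ord
        · obtain ⟨β, hβ1, hβ2⟩ := hDlam δ.card (Cardinal.lt_ord.1 hδ)
          exact ⟨β, hβ1, fun _ => hβ2⟩
        · exact ⟨0, hκpos, fun hcon => absurd hcon hδ⟩
      choose Bd hBd1 hBd2 using hBde
      have hC2club := closure_club hreg hℵ Bd hBd1
      set C2 : Set Ordinal.{0} := {γ | γ < κ.ord ∧ γ.IsLimit ∧ ∀ δ < γ, Bd δ < γ}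
        with hC2def
      have hCstar := inter_club hreg hℵ hCbclub hC2club
      set Cs : Set Ordinal.{0} := Cb ∩ C2 with hCsdef
      obtain ⟨γ₀, hγ₀Cs, _hγ₀pos⟩ := hCstar.2.1 0 hκpos
      have hγ₀κ : γ₀ < κ.ord := hCstar.1 hγ₀Cs
      set ξf : Ordinal.{0} → Ordinal.{0} := fun α => sSup (Cs ∩ Iic α) with hξdef
      have hξfact : ∀ α, γ₀ ≤ α → α < κ.ord →
          ξf α ∈ Cs ∧ ξf α ≤ α ∧ ∀ γ ∈ Cs, γ ≤ α → γ ≤ ξf α := by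
        intro α hγ₀α hακ
        have hne : (Cs ∩ Iic α).Nonempty := ⟨γ₀, hγ₀Cs, hγ₀α⟩
        have hbdd : BddAbove (Cs ∩ Iic α) := ⟨α, fun x hx => hx.2⟩
        have hle' : ξf α ≤ α := csSup_le hne (fun x hx => hx.2)
        have hgemem : ∀ γ ∈ Cs, γ ≤ α → γ ≤ ξf α := fun γ h1 h2 =>
          le_csSup hbdd ⟨h1, h2⟩
        by_cases hmem : sSup (Cs ∩ Iic α) ∈ Cs ∩ Iic α
        · exact ⟨hmem.1, hle', hgemem⟩
        · have hbdd' : ∃ β < κ.ord, ∀ x ∈ Cs ∩ Iic α, x ≤ β :=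
            ⟨α, hακ, fun x hx => hx.2⟩
          have h1 : sSup (Cs ∩ Iic α) ∈ Cb :=
            hCbclub.2.2 _ (fun x hx => hx.1.1) hne hbdd' hmem
          have h2 : sSup (Cs ∩ Iic α) ∈ C2 :=
            hC2club.2.2 _ (fun x hx => hx.1.2) hne hbdd' hmem
          exact ⟨⟨h1, h2⟩, hle', hgemem⟩
      have hkey : ∀ α, γ₀ ≤ α → α < κ.ord → (ξf α).card < (b α).card := by
        intro α hγ₀α hακ
        obtain ⟨hξCs, hξle, _⟩ := hξfact α hγ₀α hακ
        have hξκ : ξf α < κ.ord := lt_of_le_of_lt hξle hακ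
        have hξlim : (ξf α).IsLimit := hξCs.2.2.1
        set s := sSup (b '' Iio (ξf α)) with hsdef
        have himbdd : BddAbove (b '' Iio (ξf α)) := by
          refine ⟨b (ξf α), ?_⟩
          rintro _ ⟨δ, hδ, rfl⟩
          exact hbinc δ (ξf α) (le_of_lt hδ) hξκ
        have hslt : s < b (ξf α) := hCbdisc (ξf α) hξCs.1 hξκ hξlim
        have hclaim1 : ∀ δ, δ < ξf α → (Order.succ δ.card).ord ≤ s := by
          intro δ hδ
          have hBdlt : Bd δ < ξf α := hξCs.2.2.2 δ hδ
          have hα'lt : Bd δ + 1 < ξf α := by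
            rw [Ordinal.add_one_eq_succ]
            exact hξlim.succ_lt hBdlt
          have hα'κ : Bd δ + 1 < κ.ord := lt_of_lt_of_le hα'lt (hξle.trans hακ.le)
          have hδκ : δ < κ.ord := hδ.trans hξκ
          have hnP : ¬ (b (Bd δ + 1) ≤ δ.card.ord ∨
              (h (Bd δ + 1) = b (Bd δ + 1) ∧ (b (Bd δ + 1)).cof ≤ δ.card)) := by
            intro hP
            have h6 := hBd2 δ hδκ (Bd δ + 1) hα'κ hP
            have hlt' : Bd δ < Bd δ + 1 := by
              rw [Ordinal.add_one_eq_succ]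
              exact Order.lt_succ _
            exact absurd h6 (not_lt.2 hlt'.le)
          have hbgt : δ.card.ord < b (Bd δ + 1) := by
            by_contra hle''
            push_neg at hle''
            exact hnP (Or.inl hle'')
          have hcard : δ.card < (b (Bd δ + 1)).card := by
            apply Cardinal.ord_lt_ord.1
            rw [(hb _ hα'κ).2.1]
            exact hbgt
          have hsucc : (Order.succ δ.card).ord ≤ b (Bd δ + 1) := by
            rw [← (hb _ hα'κ).2.1]
            exact Cardinal.ord_le_ord.2 (Order.succ_le_of_lt hcard)
          have hmem' : b (Bd δ + 1) ≤ s :=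
            le_csSup himbdd (Set.mem_image_of_mem b (Set.mem_Iio.2 hα'lt))
          exact hsucc.trans hmem'
        have hclaim2 : (ξf α).card ≤ s.card := by
          by_contra hgt
          push_neg at hgt
          have hδlt : s.card.ord < ξf α :=
            lt_of_lt_of_le (Cardinal.ord_lt_ord.2 hgt) (Cardinal.ord_card_le (ξf α))
          have h1 := hclaim1 _ hδlt
          rw [Cardinal.card_ord] at h1
          have h2 : Order.succ s.card ≤ s.card := by
            have h3 := Ordinal.card_le_card h1
            rwa [Cardinal.card_ord] at h3
          exact absurd h2 (not_le.2 (Order.lt_succ _))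
        have hscard : s.card < (b α).card := by
          apply Cardinal.lt_ord.1
          rw [(hb α hακ).2.1]
          exact lt_of_lt_of_le hslt (hbinc (ξf α) α hξle hακ)
        exact lt_of_le_of_lt hclaim2 hscard
      set U : Ordinal.{0} → Set Ordinal.{0} := fun α =>
        ⋃ i : ↥(Iio (ξf α)), if hi : (i : Ordinal.{0}) < κ.ord
          then (σ ⟨(i : Ordinal.{0}), hi⟩ : Ordinal.{0} → Set Ordinal.{0}) α else ∅
        with hUdef
      have hUsmall : ∀ α, γ₀ ≤ α → α < κ.ord → #(U α) < Cardinal.lift.{1} (b α).card := by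
        intro α hγ₀α hακ
        obtain ⟨hξCs, hξle, _⟩ := hξfact α hγ₀α hακ
        have hbcard : ℵ₀ ≤ (b α).card := (hb α hακ).2.2
        have hιle : #(↥(Iio (ξf α))) ≤ Cardinal.lift.{1} (ξf α).card :=
          le_of_eq (Ordinal.mk_Iio_ordinal _)
        have hzero : (0 : Cardinal.{1}) < Cardinal.lift.{1} (b α).card := by
          have h7 := Cardinal.lift_lt.{0,1}.2
            (lt_of_lt_of_le Cardinal.aleph0_pos hbcard)
          simpa using h7
        by_cases hhb : h α = b α
        · refine union_small_cof hbcard _ hιle ?_ ?_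
          · rw [(hb α hακ).2.1]
            exact Cardinal.lt_ord.1 (hCbcof (ξf α) hξCs.1 α hξle hακ hhb)
          · intro i
            by_cases hi : (i : Ordinal.{0}) < κ.ord
            · simp only [dif_pos hi]
              have h8 := (((hWsub (σ ⟨(i : Ordinal.{0}), hi⟩).2) α).1 hακ).2
              rwa [hhb] at h8
            · simp only [dif_neg hi]
              rw [Cardinal.mk_emptyCollection]
              exact hzero
        · have hhlt : h α < b α := lt_of_le_of_ne ((hh α hακ).2.2) hhb
          have hHc : (h α).card < (b α).card := by
            apply Cardinal.lt_ord.1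
            rw [(hb α hακ).2.1]
            exact hhlt
          refine union_small_mul hbcard _ hιle (hkey α hγ₀α hακ) hHc ?_
          intro i
          by_cases hi : (i : Ordinal.{0}) < κ.ord
          · simp only [dif_pos hi]
            exact le_of_lt ((((hWsub (σ ⟨(i : Ordinal.{0}), hi⟩).2) α).1 hακ).2)
          · simp only [dif_neg hi]
            rw [Cardinal.mk_emptyCollection]
            exact zero_le
      have hex : ∀ α, γ₀ ≤ α → α < κ.ord → ∃ x, x < b α ∧ x ∉ U α := by
        intro α h1 h2
        by_contra hc
        push_neg at hc
        have hsub : Iio (b α) ⊆ U α := fun x hx => hc x hx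
        have hle' := Cardinal.mk_le_mk_of_subset hsub
        rw [Ordinal.mk_Iio_ordinal] at hle'
        exact absurd (lt_of_le_of_lt hle' (hUsmall α h1 h2)) (lt_irrefl _)
      choose! F hF1 hF2 using hex
      set f : Ordinal.{0} → Ordinal.{0} :=
        fun α => if γ₀ ≤ α ∧ α < κ.ord then F α else 0 with hfdef
      have hfP : f ∈ prodSet κ.ord b := by
        intro α
        constructor
        · intro hακ
          by_cases hγα : γ₀ ≤ α
          · have h9 : f α = F α := by simp [hfdef, hγα, hακ]
            rw [h9]
            exact hF1 α hγα hακ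
          · have h9 : f α = 0 := by simp [hfdef, hγα]
            rw [h9]
            exact hb0 α hακ
        · intro hακ
          have hnot : ¬ (γ₀ ≤ α ∧ α < κ.ord) := fun hcon => hακ hcon.2
          simp [hfdef, hnot]
      obtain ⟨φ, hφW, hφ⟩ := hWcov f hfP
      obtain ⟨i₀, hi₀⟩ := hσsurj ⟨φ, hφW⟩
      have hi₀κ : (i₀ : Ordinal.{0}) < κ.ord := i₀.2
      have hmaxκ : max (i₀ : Ordinal.{0}) γ₀ < κ.ord := max_lt hi₀κ hγ₀κ
      obtain ⟨γ₁, hγ₁Cs, hγ₁gt⟩ := hCstar.2.1 _ hmaxκ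
      have hγ₁κ : γ₁ < κ.ord := hCstar.1 hγ₁Cs
      obtain ⟨α, hγ₁α, hακ, hmem⟩ := hφ γ₁ hγ₁κ
      have hγ₀α : γ₀ ≤ α :=
        le_of_lt (lt_of_le_of_lt (le_max_right _ _) (hγ₁gt.trans hγ₁α))
      obtain ⟨hξCs, hξle, hξge⟩ := hξfact α hγ₀α hακ
      have hi₀ξ : (i₀ : Ordinal.{0}) < ξf α := by
        have h1 : γ₁ ≤ ξf α := hξge γ₁ hγ₁Cs (le_of_lt hγ₁α)
        exact lt_of_lt_of_le (lt_of_le_of_lt (le_max_left _ _) hγ₁gt) h1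
      have hUmem : f α ∈ U α := by
        refine Set.mem_iUnion.2 ⟨⟨(i₀ : Ordinal.{0}), hi₀ξ⟩, ?_⟩
        rw [dif_pos hi₀κ]
        have hcoe : (⟨(i₀ : Ordinal.{0}), hi₀κ⟩ : ↥(Iio κ.ord)) = i₀ :=
          Subtype.ext rfl
        rw [hcoe, hi₀]
        exact hmem
      have hfnot : f α ∉ U α := by
        have h9 : f α = F α := by simp [hfdef, hγ₀α, hακ]
        rw [h9]
        exact hF2 α hγ₀α hακ
      exact hfnot hUmem

end BGBS
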